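/- Let n ≥ 1 and a ≥ 2 be natural numbers. Then for every g ∈ MvPolynomial (Fin n) ℝ that is homogeneous of degree a − 2 there exists p ∈ MvPolynomial (Fin n) ℝ homogeneous of degree a with Δp = g; that is, the polynomial Laplacian maps the space of homogeneous polynomials of degree a onto the space of homogeneous polynomials of degree a − 2. -/

import Mathlib

/-!
By Euler's identity, `Δ (r² h) = (2 n + 4 d) h + r² Δ h` for `h` homogeneous of degree `d`, so it
suffices to solve `c h + r² Δ h = g` in degree `d` with `c = 2 n + 4 d > 0`. Solving this for every
positive integer `c` goes by induction on `d`: for `d ≤ 1` the Laplacian vanishes and `h = g / c`;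
otherwise solve the same equation for `Δ g` in degree `d - 2` with constant `c + 2 n + 4 (d - 2)`,
getting `u`, and then `h = (g - r² u) / c` has `Δ h = u`.
-/

open MvPolynomial

namespace MvPolynomial

section CommSemiring

variable {σ R : Type*} [CommSemiring R]

theorem pderiv_eq_zero_of_isHomogeneous_zero {p : MvPolynomial σ R} (hp : p.IsHomogeneous 0)
    (i : σ) : pderiv i p = 0 := by
  rw [← totalDegree_zero_iff_isHomogeneous, totalDegree_eq_zero_iff_eq_C] at hp
  rw [hp, pderiv_C]

variable [Fintype σ]

noncomputable def laplacian : MvPolynomial σ R →ₗ[R] MvPolynomial σ R :=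
  ∑ i, (pderiv i).toLinearMap ∘ₗ (pderiv i).toLinearMap

theorem laplacian_apply (p : MvPolynomial σ R) :
    laplacian p = ∑ i, pderiv i (pderiv i p) := by
  simp [laplacian]

variable (σ R) in
noncomputable def radiusSq : MvPolynomial σ R := ∑ i, X i ^ 2

theorem isHomogeneous_radiusSq : (radiusSq σ R).IsHomogeneous 2 :=
  IsHomogeneous.sum _ _ _ fun i _ => isHomogeneous_X_pow i 2

theorem IsHomogeneous.radiusSq_mul {h : MvPolynomial σ R} {d : ℕ} (hh : h.IsHomogeneous d) :
    (radiusSq σ R * h).IsHomogeneous (d + 2) := by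
  simpa [add_comm] using isHomogeneous_radiusSq.mul hh

theorem pderiv_radiusSq (i : σ) : pderiv i (radiusSq σ R) = 2 * X i := by
  classical
  rw [radiusSq, map_sum, Finset.sum_eq_single i (fun j _ hji => by simp [pderiv_X_of_ne hji])
    (by simp)]
  simp [mul_comm]

theorem IsHomogeneous.laplacian {p : MvPolynomial σ R} {n : ℕ} (hp : p.IsHomogeneous n) :
    (laplacian p).IsHomogeneous (n - 2) := by
  rw [laplacian_apply]
  exact IsHomogeneous.sum _ _ _ fun i _ => hp.pderiv.pderiv

theorem laplacian_eq_zero_of_isHomogeneous_of_le_one {p : MvPolynomial σ R} {n : ℕ}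
    (hp : p.IsHomogeneous n) (hn : n ≤ 1) : laplacian p = 0 := by
  have hp' : ∀ i, (pderiv i p).IsHomogeneous 0 := fun i => by
    simpa [Nat.sub_eq_zero_of_le hn] using hp.pderiv
  simp [laplacian_apply, pderiv_eq_zero_of_isHomogeneous_zero (hp' _)]

/-- Euler's identity turns the cross terms `4 ∑ i, X i * pderiv i h` into `4 d h`. -/
theorem laplacian_radiusSq_mul {h : MvPolynomial σ R} {d : ℕ} (hh : h.IsHomogeneous d) :
    laplacian (radiusSq σ R * h) =
      (2 * Fintype.card σ + 4 * d) • h + radiusSq σ R * laplacian h := by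
  have pderiv_pderiv : ∀ i, pderiv i (pderiv i (radiusSq σ R * h)) =
      2 * h + 4 * (X i * pderiv i h) + radiusSq σ R * pderiv i (pderiv i h) := fun i => by
    have pderiv_two : pderiv i (2 : MvPolynomial σ R) = 0 := by
      exact_mod_cast (pderiv i).map_natCast 2
    simp only [Derivation.leibniz, pderiv_radiusSq, map_add, smul_eq_mul, pderiv_X_self,
      pderiv_two]
    ring
  simp only [laplacian_apply, pderiv_pderiv, Finset.sum_add_distrib, ← Finset.mul_sum,
    hh.sum_X_mul_pderiv]
  simp [add_smul, mul_smul, nsmul_eq_mul]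

end CommSemiring

section Field

variable {σ K : Type*} [Fintype σ] [Field K] [CharZero K]

theorem exists_isHomogeneous_smul_add_radiusSq_mul_laplacian_eq {d c : ℕ} (hc : c ≠ 0)
    {g : MvPolynomial σ K} (hg : g.IsHomogeneous d) :
    ∃ h : MvPolynomial σ K, h.IsHomogeneous d ∧ c • h + radiusSq σ K * laplacian h = g := by
  induction d using Nat.strong_induction_on generalizing c g with
  | _ d ih =>
  have hc' : (c : K) ≠ 0 := Nat.cast_ne_zero.mpr hc
  rcases le_or_gt d 1 with hd | hd
  · refine ⟨(c : K)⁻¹ • g, (homogeneousSubmodule σ K d).smul_mem _ hg, ?_⟩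
    rw [map_smul, laplacian_eq_zero_of_isHomogeneous_of_le_one hg hd, smul_zero, mul_zero,
      add_zero, ← Nat.cast_smul_eq_nsmul K, smul_inv_smul₀ hc']
  obtain ⟨k, rfl⟩ : ∃ k, d = k + 2 := ⟨d - 2, by omega⟩
  obtain ⟨u, hu, hu_eq⟩ := ih k (by omega) (c := c + (2 * Fintype.card σ + 4 * k))
    (by omega) hg.laplacian
  have hlap : laplacian ((c : K)⁻¹ • (g - radiusSq σ K * u)) = u := by
    rw [map_smul, map_sub, laplacian_radiusSq_mul hu, ← hu_eq, add_smul, add_assoc,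
      add_sub_cancel_right, ← Nat.cast_smul_eq_nsmul K, inv_smul_smul₀ hc']
  refine ⟨(c : K)⁻¹ • (g - radiusSq σ K * u),
    (homogeneousSubmodule σ K _).smul_mem _ (hg.sub hu.radiusSq_mul), ?_⟩
  rw [hlap, ← Nat.cast_smul_eq_nsmul K, smul_inv_smul₀ hc', sub_add_cancel]

end Field

end MvPolynomial

/-- The polynomial Laplacian `Δp = ∑ i, pderiv i (pderiv i p)` maps the space of homogeneous
polynomials of degree `a ≥ 2` onto the space of homogeneous polynomials of degree `a - 2`. -/
theorem laplacian_surjective_on_homogeneous (n a : ℕ) (hn : 1 ≤ n) (ha : 2 ≤ a)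
    (g : MvPolynomial (Fin n) ℝ) (hg : g ∈ homogeneousSubmodule (Fin n) ℝ (a - 2)) :
    ∃ p ∈ homogeneousSubmodule (Fin n) ℝ a,
      (∑ i, pderiv i (pderiv i p)) = g := by
  obtain ⟨k, rfl⟩ : ∃ k, a = k + 2 := ⟨a - 2, by omega⟩
  rw [mem_homogeneousSubmodule, Nat.add_sub_cancel] at hg
  obtain ⟨h, hh, hh_eq⟩ := exists_isHomogeneous_smul_add_radiusSq_mul_laplacian_eq
    (c := 2 * Fintype.card (Fin n) + 4 * k) (by rw [Fintype.card_fin]; omega) hg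
  refine ⟨radiusSq (Fin n) ℝ * h, ?_, ?_⟩
  · exact hh.radiusSq_mul
  · rw [← laplacian_apply, laplacian_radiusSq_mul hh, hh_eq]
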